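/- arXiv:math/9804124 — 3 statements merged into one kernel-verified Lean document; each statement's English description precedes it below -/
import Mathlib

section
/- For every natural number n, the determinant of the (n+1)×(n+1) matrix whose (i,j) entry (0 ≤ i,j ≤ n) is C(i+j, i) · C(2n-i-j, n-i) equals (2n+1)!^(n+1) / ∏_{k=0}^{2n+1} k!. -/
open Polynomial Finset

/-- Pascal recurrence for alternating binomial sums. -/
lemma diff_step (k : ℕ) (f : ℕ → ℚ) :
    ∑ j ∈ range (k+2), (-1:ℚ)^j * ((k+1).choose j) * f j
      = ∑ j ∈ range (k+1), (-1:ℚ)^j * (k.choose j) * (f j - f (j+1)) := by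
  rw [Finset.sum_range_succ' (fun j => (-1:ℚ)^j * ((k+1).choose j) * f j) (k+1)]
  have h1 : ∀ i, (-1:ℚ)^(i+1) * ((k+1).choose (i+1)) * f (i+1)
      = -((-1:ℚ)^i * (k.choose i) * f (i+1)) - (-1:ℚ)^i * (k.choose (i+1)) * f (i+1) := by
    intro i
    rw [Nat.choose_succ_succ]
    push_cast
    ring
  simp only [h1]
  simp only [mul_sub]
  rw [Finset.sum_sub_distrib]
  have h2 : ∑ i ∈ range (k+1), (-1:ℚ)^i * (k.choose (i+1)) * f (i+1)
      = ∑ i ∈ range k, (-1:ℚ)^i * (k.choose (i+1)) * f (i+1) := by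
    rw [Finset.sum_range_succ, Nat.choose_succ_self]
    simp
  have h3 : ∑ j ∈ range (k+1), (-1:ℚ)^j * (k.choose j) * f j
      = -(∑ i ∈ range k, (-1:ℚ)^i * (k.choose (i+1)) * f (i+1)) + f 0 := by
    rw [Finset.sum_range_succ' (fun j => (-1:ℚ)^j * (k.choose j) * f j) k]
    rw [← Finset.sum_neg_distrib]
    norm_num [pow_succ]
  rw [Finset.sum_sub_distrib, h2, h3]
  norm_num
  ring

lemma alt_sum_poly (k : ℕ) (p : ℚ[X]) (hp : p.degree < (k : ℕ)) :
    ∑ j ∈ range (k+1), (-1:ℚ)^j * (k.choose j) * p.eval (j:ℚ) = 0 := by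
  induction k generalizing p with
  | zero =>
    have : p = 0 := by
      rw [← Polynomial.degree_eq_bot]
      exact Nat.WithBot.lt_zero_iff.mp (by exact_mod_cast hp)
    simp [this]
  | succ k ih =>
    have key : ∑ j ∈ range (k+2), (-1:ℚ)^j * ((k+1).choose j) * p.eval (j:ℚ)
        = ∑ j ∈ range (k+1), (-1:ℚ)^j * (k.choose j) * ((p - p.comp (X + 1)).eval (j:ℚ)) := by
      rw [diff_step k (fun j => p.eval (j:ℚ))]
      refine Finset.sum_congr rfl fun j _ => ?_
      simp only [Polynomial.eval_sub, Polynomial.eval_comp, Polynomial.eval_add,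
        Polynomial.eval_X, Polynomial.eval_one]
      push_cast
      ring
    rw [key]
    apply ih
    -- degree (p - p.comp (X+1)) < k
    rcases eq_or_lt_of_le (Nat.zero_le p.natDegree) with h0 | h0
    · -- natDegree p = 0 : p is a constant
      obtain ⟨a, rfl⟩ := Polynomial.natDegree_eq_zero.mp h0.symm
      simp only [Polynomial.C_comp, sub_self]
      simpa using (by exact_mod_cast WithBot.bot_lt_coe k : (⊥ : WithBot ℕ) < (k:ℕ))
    · have hpne : p ≠ 0 := fun h => by simp [h] at h0
      have hq1 : natDegree (X + 1 : ℚ[X]) = 1 := by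
        simpa using Polynomial.natDegree_X_add_C (1 : ℚ)
      have hcompne : p.comp (X + 1) ≠ 0 := fun h => by
        have := Polynomial.natDegree_comp (p := p) (q := (X + 1 : ℚ[X]))
        rw [h, hq1] at this
        simp at this
        omega
      have hdeg : p.degree = (p.comp (X + 1)).degree := by
        rw [Polynomial.degree_eq_natDegree hpne, Polynomial.degree_eq_natDegree hcompne,
          Polynomial.natDegree_comp, hq1, mul_one]
      have hlead : p.leadingCoeff = (p.comp (X + 1)).leadingCoeff := by
        rw [Polynomial.leadingCoeff_comp (by rw [hq1]; omega)]
        have : (X + 1 : ℚ[X]).leadingCoeff = 1 := by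
          simpa using Polynomial.leadingCoeff_X_add_C (1:ℚ)
        rw [this, one_pow, mul_one]
      have hlt := Polynomial.degree_sub_lt hdeg hpne hlead
      calc (p - p.comp (X+1)).degree < p.degree := hlt
        _ ≤ (k : ℕ) := by
          rw [Polynomial.degree_eq_natDegree hpne] at hp ⊢
          exact_mod_cast Nat.lt_succ_iff.mp (by exact_mod_cast hp)
lemma partial_frac (k : ℕ) : ∀ (x : ℚ), (∀ i ∈ range (k+1), x - (i:ℚ) ≠ 0) →
    (∑ j ∈ range (k+1), (-1:ℚ)^j * (k.choose j) / (x - (j:ℚ))) * ∏ i ∈ range (k+1), (x - (i:ℚ))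
      = (-1:ℚ)^k * k.factorial := by
  induction k with
  | zero =>
    intro x hx
    have h0 : x - ((0:ℕ):ℚ) ≠ 0 := hx 0 (by simp)
    simp only [zero_add, Finset.sum_range_one, Finset.prod_range_one, pow_zero,
      Nat.choose_self, Nat.cast_one, one_mul, Nat.cast_zero, Nat.factorial_zero]
    rw [Nat.cast_zero, sub_zero] at h0
    field_simp
  | succ k ih =>
    intro x hx
    have hS : ∑ j ∈ range (k+2), (-1:ℚ)^j * ((k+1).choose j) / (x - (j:ℚ))
        = (∑ j ∈ range (k+1), (-1:ℚ)^j * (k.choose j) / (x - (j:ℚ)))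
          - ∑ j ∈ range (k+1), (-1:ℚ)^j * (k.choose j) / ((x-1) - (j:ℚ)) := by
      have := diff_step k (fun j => 1 / (x - (j:ℚ)))
      rw [show ∑ j ∈ range (k+2), (-1:ℚ)^j * ((k+1).choose j) / (x - (j:ℚ))
          = ∑ j ∈ range (k+2), (-1:ℚ)^j * ((k+1).choose j) * (1 / (x - (j:ℚ))) by
        exact Finset.sum_congr rfl fun j _ => by rw [mul_one_div]]
      rw [this, ← Finset.sum_sub_distrib]
      refine Finset.sum_congr rfl fun j hj => ?_
      rw [mul_sub]
      push_cast
      rw [mul_one_div, mul_one_div]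
      ring_nf
    have hP1 : ∏ i ∈ range (k+2), (x - (i:ℚ)) = (∏ i ∈ range (k+1), (x - (i:ℚ))) * (x - ((k+1:ℕ):ℚ)) := by
      rw [Finset.prod_range_succ]
    have hP2 : ∏ i ∈ range (k+2), (x - (i:ℚ)) = x * ∏ i ∈ range (k+1), ((x-1) - (i:ℚ)) := by
      rw [Finset.prod_range_succ' (fun i => x - (i:ℚ)) (k+1), mul_comm]
      congr 1
      · norm_num
      · exact Finset.prod_congr rfl fun i _ => by push_cast; ring
    have hA := ih x (fun i hi => hx i (Finset.mem_range.mpr (by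
        have := Finset.mem_range.mp hi; omega)))
    have hB := ih (x-1) (fun i hi => by
      have h := hx (i+1) (Finset.mem_range.mpr (by have := Finset.mem_range.mp hi; omega))
      intro hc; apply h; push_cast at hc ⊢; linarith)
    rw [hS, sub_mul, Nat.factorial_succ]
    push_cast at hP1 ⊢
    linear_combination (x - ((k:ℚ)+1)) * hA - x * hB
      + (∑ j ∈ range (k+1), (-1:ℚ)^j * (k.choose j) / (x - (j:ℚ))) * hP1
      - (∑ j ∈ range (k+1), (-1:ℚ)^j * (k.choose j) / ((x-1) - (j:ℚ))) * hP2
lemma fact_add_prod (b m : ℕ) : (b+m).factorial = b.factorial * ∏ r ∈ range m, (b+1+r) := by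
  induction m with
  | zero => simp
  | succ m ih =>
    rw [Finset.prod_range_succ, show b + (m+1) = (b+m)+1 by omega, Nat.factorial_succ, ih]
    ring

lemma nat_core (a j m t : ℕ) (hj : j ≤ a) :
    a.choose j * ((j+m).factorial * ((a - j) + t).factorial)
      = a.factorial * (∏ r ∈ range m, (j+1+r)) * (∏ u ∈ range t, ((a+1+u) - j)) := by
  have h1 := fact_add_prod j m
  have h2 := fact_add_prod (a - j) t
  have h3 := Nat.choose_mul_factorial_mul_factorial hj
  have h4 : ∏ u ∈ range t, ((a - j)+1+u) = ∏ u ∈ range t, ((a+1+u) - j) :=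
    Finset.prod_congr rfl fun u _ => by omega
  calc a.choose j * ((j+m).factorial * ((a - j) + t).factorial)
      = (a.choose j * j.factorial * (a-j).factorial) * (∏ r ∈ range m, (j+1+r))
          * (∏ u ∈ range t, ((a-j)+1+u)) := by rw [h1, h2]; ring
    _ = a.factorial * (∏ r ∈ range m, (j+1+r)) * (∏ u ∈ range t, ((a+1+u) - j)) := by
        rw [h3, h4]

lemma S_vanish (n k m : ℕ) (hk : k ≤ n) (hm : m < k) :
    ∑ j ∈ range (n+1), ((-1:ℚ)^j * (k.choose j) * ((2*n+1-k).choose j))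
      * (((j+m).factorial * (2*n-j-m).factorial : ℕ) : ℚ) = 0 := by
  set a := 2*n+1-k with ha
  have hak : k ≤ a := by omega
  have trunc : ∑ j ∈ range (n+1), ((-1:ℚ)^j * (k.choose j) * (a.choose j))
      * (((j+m).factorial * (2*n-j-m).factorial : ℕ) : ℚ)
      = ∑ j ∈ range (k+1), ((-1:ℚ)^j * (k.choose j) * (a.choose j))
      * (((j+m).factorial * (2*n-j-m).factorial : ℕ) : ℚ) := by
    apply (Finset.sum_subset (Finset.range_subset_range.mpr (by omega)) ?_).symm
    intro j hj hnot
    have hjk : k < j := by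
      simp only [Finset.mem_range] at hj hnot; omega
    simp [Nat.choose_eq_zero_of_lt hjk]
  rw [trunc]
  set p : ℚ[X] := C ((a.factorial : ℕ) : ℚ) * (∏ r ∈ range m, (X + C ((r:ℚ)+1)))
      * (∏ u ∈ range (k-m-1), (C (((a+1+u : ℕ)):ℚ) - X)) with hp
  have heval : ∀ j : ℕ, j ≤ k →
      ((a.choose j : ℚ)) * (((j+m).factorial * (2*n-j-m).factorial : ℕ) : ℚ) = p.eval (j:ℚ) := by
    intro j hj
    have hja : j ≤ a := le_trans hj hak
    have hnat := nat_core a j m (k-m-1) hja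
    have harg : (a - j) + (k-m-1) = 2*n-j-m := by omega
    rw [harg] at hnat
    have heq : p.eval (j:ℚ) = ((a.factorial : ℕ) : ℚ) * (∏ r ∈ range m, ((j:ℚ) + ((r:ℚ)+1)))
        * (∏ u ∈ range (k-m-1), ((((a+1+u:ℕ)):ℚ) - (j:ℚ))) := by
      rw [hp]
      simp only [Polynomial.eval_mul, Polynomial.eval_C, Polynomial.eval_prod,
        Polynomial.eval_add, Polynomial.eval_X, Polynomial.eval_sub]
    have c1 : ∏ r ∈ range m, ((j:ℚ) + ((r:ℚ)+1)) = ((∏ r ∈ range m, (j+1+r) : ℕ) : ℚ) := by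
      rw [Nat.cast_prod]
      refine Finset.prod_congr rfl fun r _ => ?_
      push_cast
      try ring
    have c2 : ∏ u ∈ range (k-m-1), ((((a+1+u:ℕ)):ℚ) - (j:ℚ))
        = ((∏ u ∈ range (k-m-1), ((a+1+u) - j) : ℕ) : ℚ) := by
      rw [Nat.cast_prod]
      refine Finset.prod_congr rfl fun u _ => ?_
      rw [Nat.cast_sub (by omega)]
      all_goals try push_cast
      all_goals try ring
    have hq : ((a.choose j : ℕ) : ℚ) * (((j+m).factorial * (2*n-j-m).factorial : ℕ) : ℚ)
        = ((a.factorial : ℕ):ℚ) * ((∏ r ∈ range m, (j+1+r) : ℕ):ℚ)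
          * ((∏ u ∈ range (k-m-1), ((a+1+u) - j) : ℕ):ℚ) := by
      exact_mod_cast congrArg (Nat.cast (R := ℚ)) hnat
    rw [heq, c1, c2, hq]
  have hdeg : p.degree < (k : ℕ) := by
    have hd1 : p.natDegree ≤ (0 + m) + (k-m-1) := by
      calc p.natDegree ≤ (C ((a.factorial : ℕ) : ℚ) * (∏ r ∈ range m, (X + C ((r:ℚ)+1)))).natDegree
            + (∏ u ∈ range (k-m-1), (C (((a+1+u : ℕ)):ℚ) - X)).natDegree := Polynomial.natDegree_mul_le
        _ ≤ ((C ((a.factorial : ℕ) : ℚ)).natDegree + (∏ r ∈ range m, (X + C ((r:ℚ)+1))).natDegree)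
            + (∏ u ∈ range (k-m-1), (C (((a+1+u : ℕ)):ℚ) - X)).natDegree := by
            exact Nat.add_le_add_right Polynomial.natDegree_mul_le _
        _ ≤ (0 + m) + (k-m-1) := by
            refine Nat.add_le_add (Nat.add_le_add (le_of_eq (Polynomial.natDegree_C _)) ?_) ?_
            · calc (∏ r ∈ range m, (X + C ((r:ℚ)+1))).natDegree
                  ≤ ∑ r ∈ range m, (X + C ((r:ℚ)+1)).natDegree := Polynomial.natDegree_prod_le _ _
                _ ≤ m := by
                  have := Finset.sum_le_card_nsmul (range m)
                    (fun r => (X + C ((r:ℚ)+1)).natDegree) 1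
                    (fun r _ => le_of_eq (Polynomial.natDegree_X_add_C _))
                  simpa using this
            · calc (∏ u ∈ range (k-m-1), (C (((a+1+u : ℕ)):ℚ) - X)).natDegree
                  ≤ ∑ u ∈ range (k-m-1), (C (((a+1+u : ℕ)):ℚ) - X).natDegree :=
                    Polynomial.natDegree_prod_le _ _
                _ ≤ k-m-1 := by
                  have h1 : ∀ u : ℕ, (C (((a+1+u : ℕ)):ℚ) - X).natDegree = 1 := fun u => by
                    rw [show (C (((a+1+u : ℕ)):ℚ) - X) = -(X - C (((a+1+u : ℕ)):ℚ)) by ring,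
                      Polynomial.natDegree_neg, Polynomial.natDegree_X_sub_C]
                  have := Finset.sum_le_card_nsmul (range (k-m-1))
                    (fun u => (C (((a+1+u : ℕ)):ℚ) - X).natDegree) 1
                    (fun u _ => le_of_eq (h1 u))
                  simpa using this
    have hd2 : p.natDegree < k := by omega
    calc p.degree ≤ (p.natDegree : WithBot ℕ) := Polynomial.degree_le_natDegree
      _ < (k : WithBot ℕ) := by exact_mod_cast hd2
  have final : ∑ j ∈ range (k+1), ((-1:ℚ)^j * (k.choose j) * (a.choose j))
      * (((j+m).factorial * (2*n-j-m).factorial : ℕ) : ℚ)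
      = ∑ j ∈ range (k+1), (-1:ℚ)^j * (k.choose j) * p.eval (j:ℚ) := by
    refine Finset.sum_congr rfl fun j hj => ?_
    rw [← heval j (by have := Finset.mem_range.mp hj; omega)]
    ring
  rw [final]
  exact alt_sum_poly k p hdeg
lemma S_diag (n k : ℕ) (hk : k ≤ n) :
    ∑ j ∈ range (n+1), ((-1:ℚ)^j * (k.choose j) * ((2*n+1-k).choose j))
      * (((j+k).factorial * (2*n-j-k).factorial : ℕ) : ℚ)
      = (-1:ℚ)^k * (((2*n+1).factorial * k.factorial * (2*n-2*k).factorial : ℕ) : ℚ)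
        / (((2*n+1-k).factorial : ℕ) : ℚ) := by
  set a := 2*n+1-k with ha
  have hka : k+1 ≤ a := by omega
  set x : ℚ := (a : ℚ) with hxdef
  have hxi : ∀ i : ℕ, i ≤ k → x - (i:ℚ) ≠ 0 := by
    intro i hi
    have h1 : ((a - i : ℕ):ℚ) = x - (i:ℚ) := by
      rw [Nat.cast_sub (by omega)]
    rw [← h1]
    have : 0 < a - i := by omega
    positivity
  have trunc : ∑ j ∈ range (n+1), ((-1:ℚ)^j * (k.choose j) * (a.choose j))
      * (((j+k).factorial * (2*n-j-k).factorial : ℕ) : ℚ)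
      = ∑ j ∈ range (k+1), ((-1:ℚ)^j * (k.choose j) * (a.choose j))
      * (((j+k).factorial * (2*n-j-k).factorial : ℕ) : ℚ) := by
    apply (Finset.sum_subset (Finset.range_subset_range.mpr (by omega)) ?_).symm
    intro j hj hnot
    have hjk : k < j := by
      simp only [Finset.mem_range] at hj hnot; omega
    simp [Nat.choose_eq_zero_of_lt hjk]
  rw [trunc]
  set P : ℚ[X] := ∏ r ∈ range k, (X + C ((r:ℚ)+1)) with hPdef
  obtain ⟨Q, hQ⟩ := Polynomial.X_sub_C_dvd_sub_C_eval (a := x) (p := P)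
  -- degree of Q
  have hQdeg : Q.degree < (k : ℕ) := by
    rcases eq_or_ne Q 0 with h | h
    · rw [h, Polynomial.degree_zero]
      exact bot_lt_iff_ne_bot.mpr (by simp)
    · rcases Nat.eq_zero_or_pos k with hk0 | hk0
      · exfalso
        apply h
        have hP1 : P = 1 := by rw [hPdef, hk0]; simp
        rw [hP1] at hQ
        simp at hQ
        rcases hQ with h1 | h1
        · exact absurd h1 (Polynomial.X_sub_C_ne_zero x)
        · exact h1
      · have hPmonic : P.Monic :=
          Polynomial.monic_prod_of_monic _ _ (fun r _ => Polynomial.monic_X_add_C _)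
        have hPnd : P.natDegree = k := by
          rw [hPdef, Polynomial.natDegree_prod _ _ (fun r _ => Polynomial.X_add_C_ne_zero _)]
          have hdeg1 : ∀ r ∈ range k, (X + C ((r:ℚ)+1)).natDegree = 1 :=
            fun r _ => Polynomial.natDegree_X_add_C _
          rw [Finset.sum_congr rfl hdeg1]
          simp
        have hPd : P.degree = (k : ℕ) := by
          rw [Polynomial.degree_eq_natDegree hPmonic.ne_zero, hPnd]
        have h0 : (0 : WithBot ℕ) < P.degree := by
          rw [hPd]; exact_mod_cast hk0
        have hd1 : (P - C (P.eval x)).degree = (k : ℕ) := by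
          rw [Polynomial.degree_sub_C h0, hPd]
        rw [hQ, Polynomial.degree_mul, Polynomial.degree_X_sub_C] at hd1
        rw [Polynomial.degree_eq_natDegree h] at hd1 ⊢
        have h2 : 1 + Q.natDegree = k := by exact_mod_cast hd1
        exact_mod_cast (by omega : Q.natDegree < k)
  have hPj : ∀ j : ℕ, P.eval (j:ℚ) = ((j:ℚ) - x) * Q.eval (j:ℚ) + P.eval x := by
    intro j
    have h := congrArg (Polynomial.eval (j:ℚ)) hQ
    simp only [Polynomial.eval_sub, Polynomial.eval_mul, Polynomial.eval_C,
      Polynomial.eval_X] at h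
    linear_combination h
  -- per-term value
  have hterm : ∀ j : ℕ, j ≤ k →
      ((a.choose j : ℚ)) * (((j+k).factorial * (2*n-j-k).factorial : ℕ) : ℚ)
        = ((a.factorial : ℕ):ℚ) * P.eval (j:ℚ) / (x - (j:ℚ)) := by
    intro j hj
    have hja : j ≤ a := by omega
    have hnc := nat_core a j k 0
    simp only [Finset.range_zero, Finset.prod_empty, mul_one, Nat.add_zero] at hnc
    have hnc := hnc hja
    have e1 : (a - j).factorial = (2*n-j-k).factorial * (a - j) := by
      rw [show a - j = (2*n-j-k)+1 by omega, Nat.factorial_succ]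
      ring
    have hnat : a.choose j * ((j+k).factorial * (2*n-j-k).factorial) * (a - j)
        = a.factorial * ∏ r ∈ range k, (j+1+r) := by
      rw [← hnc, e1]; ring
    have hPje : P.eval (j:ℚ) = ((∏ r ∈ range k, (j+1+r) : ℕ) : ℚ) := by
      rw [hPdef, Polynomial.eval_prod, Nat.cast_prod]
      refine Finset.prod_congr rfl fun r _ => ?_
      simp only [Polynomial.eval_add, Polynomial.eval_X, Polynomial.eval_C]
      push_cast
      ring
    have hxj : x - (j:ℚ) = ((a - j : ℕ) : ℚ) := by rw [Nat.cast_sub hja]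
    rw [eq_div_iff (by rw [hxj]; exact Nat.cast_ne_zero.mpr (by omega))]
    rw [hPje, hxj]
    exact_mod_cast congrArg (Nat.cast (R := ℚ)) hnat
  -- rewrite terms and split sum
  have step : ∑ j ∈ range (k+1), ((-1:ℚ)^j * (k.choose j) * (a.choose j))
      * (((j+k).factorial * (2*n-j-k).factorial : ℕ) : ℚ)
      = (-((a.factorial : ℕ):ℚ)) * (∑ j ∈ range (k+1), (-1:ℚ)^j * (k.choose j) * Q.eval (j:ℚ))
        + ((a.factorial : ℕ):ℚ) * P.eval x
          * ∑ j ∈ range (k+1), (-1:ℚ)^j * (k.choose j) / (x - (j:ℚ)) := by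
    rw [Finset.mul_sum, Finset.mul_sum, ← Finset.sum_add_distrib]
    refine Finset.sum_congr rfl fun j hj => ?_
    have hjk : j ≤ k := by have := Finset.mem_range.mp hj; omega
    have h1 := hterm j hjk
    have hne := hxi j hjk
    rw [show ((-1:ℚ)^j * (k.choose j) * (a.choose j))
        * (((j+k).factorial * (2*n-j-k).factorial : ℕ) : ℚ)
        = ((-1:ℚ)^j * (k.choose j)) * ((a.choose j : ℚ) * (((j+k).factorial * (2*n-j-k).factorial : ℕ) : ℚ)) by ring,
      h1, hPj j]
    field_simp
    ring
  rw [step]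
  rw [alt_sum_poly k Q hQdeg, mul_zero, zero_add]
  -- evaluate the partial fraction sum
  have hprod : ∏ i ∈ range (k+1), (x - (i:ℚ)) = ((a.descFactorial (k+1) : ℕ) : ℚ) := by
    rw [Nat.descFactorial_eq_prod_range, Nat.cast_prod]
    refine Finset.prod_congr rfl fun i hi => ?_
    rw [Nat.cast_sub (by have := Finset.mem_range.mp hi; omega)]
  have hpfrac := partial_frac k x (fun i hi => hxi i (by have := Finset.mem_range.mp hi; omega))
  have hdesc : (2*n-2*k).factorial * a.descFactorial (k+1) = a.factorial := by
    have := Nat.factorial_mul_descFactorial hka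
    rw [show a - (k+1) = 2*n-2*k by omega] at this
    exact this
  have hPx : P.eval x = ((∏ r ∈ range k, (a+1+r) : ℕ) : ℚ) := by
    rw [hPdef, Polynomial.eval_prod, Nat.cast_prod]
    refine Finset.prod_congr rfl fun r _ => ?_
    simp only [Polynomial.eval_add, Polynomial.eval_X, Polynomial.eval_C, hxdef]
    push_cast
    ring
  have hPxval : a.factorial * ∏ r ∈ range k, (a+1+r) = (2*n+1).factorial := by
    have := fact_add_prod a k
    rw [show a + k = 2*n+1 by omega] at this
    exact this.symm
  -- final algebra
  have hdne : ((a.descFactorial (k+1) : ℕ) : ℚ) ≠ 0 := by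
    refine Nat.cast_ne_zero.mpr fun h0 => ?_
    rw [h0, mul_zero] at hdesc
    exact (Nat.factorial_ne_zero a) hdesc.symm
  have hane : ((a.factorial : ℕ) : ℚ) ≠ 0 := by positivity
  rw [hprod] at hpfrac
  have hsum : ∑ j ∈ range (k+1), (-1:ℚ)^j * (k.choose j) / (x - (j:ℚ))
      = (-1:ℚ)^k * (k.factorial : ℚ) / ((a.descFactorial (k+1) : ℕ) : ℚ) := by
    rw [eq_div_iff hdne]
    exact hpfrac
  rw [hsum, hPx]
  have hq1 : ((a.factorial : ℕ):ℚ) * ((∏ r ∈ range k, (a+1+r) : ℕ) : ℚ) = (((2*n+1).factorial : ℕ):ℚ) := by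
    exact_mod_cast congrArg (Nat.cast (R := ℚ)) hPxval
  have hq2 : (((2*n-2*k).factorial : ℕ):ℚ) * ((a.descFactorial (k+1) : ℕ) : ℚ) = ((a.factorial : ℕ):ℚ) := by
    exact_mod_cast congrArg (Nat.cast (R := ℚ)) hdesc
  rw [Nat.cast_mul, Nat.cast_mul, ← mul_div_assoc,
    div_eq_div_iff hdne hane]
  linear_combination ((-1:ℚ)^k * (k.factorial:ℚ) * ((a.factorial : ℕ):ℚ)) * hq1
    - ((-1:ℚ)^k * (((2*n+1).factorial:ℕ):ℚ) * (k.factorial:ℚ)) * hq2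
lemma detA (n : ℕ) :
    (Matrix.of fun i j : Fin (n+1) =>
        ((((i:ℕ)+(j:ℕ)).factorial * (2*n-(i:ℕ)-(j:ℕ)).factorial : ℕ) : ℚ)).det
      * (∏ k ∈ range (n+1), (((2*n+1-k).choose k : ℕ) : ℚ))^2
    = ∏ k ∈ range (n+1), ((((2*n+1-k).choose k : ℕ):ℚ)
        * ((((2*n+1).factorial * k.factorial * (2*n-2*k).factorial : ℕ)):ℚ)
        / (((2*n+1-k).factorial : ℕ):ℚ)) := by
  set A : Matrix (Fin (n+1)) (Fin (n+1)) ℚ := Matrix.of fun i j =>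
    ((((i:ℕ)+(j:ℕ)).factorial * (2*n-(i:ℕ)-(j:ℕ)).factorial : ℕ) : ℚ) with hA
  set Cm : Matrix (Fin (n+1)) (Fin (n+1)) ℚ := Matrix.of fun k j =>
    ((-1:ℚ)^(j:ℕ) * (((k:ℕ).choose (j:ℕ)):ℚ) * (((2*n+1-(k:ℕ)).choose (j:ℕ)):ℚ)) with hC
  have hCA : ∀ k m : Fin (n+1), (Cm * A) k m
      = ∑ j ∈ range (n+1), ((-1:ℚ)^j * (((k:ℕ).choose j):ℚ) * (((2*n+1-(k:ℕ)).choose j):ℚ))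
        * (((j+(m:ℕ)).factorial * (2*n-j-(m:ℕ)).factorial : ℕ) : ℚ) := by
    intro k m
    rw [Matrix.mul_apply]
    exact Fin.sum_univ_eq_sum_range (fun j => ((-1:ℚ)^j * (((k:ℕ).choose j):ℚ)
      * (((2*n+1-(k:ℕ)).choose j):ℚ)) * (((j+(m:ℕ)).factorial * (2*n-j-(m:ℕ)).factorial : ℕ) : ℚ)) (n+1)
  have hvan : ∀ k m : Fin (n+1), (m:ℕ) < (k:ℕ) → (Cm * A) k m = 0 := by
    intro k m h
    rw [hCA]
    exact S_vanish n k m (by omega) h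
  have hdiagval : ∀ k : Fin (n+1), (Cm * A) k k
      = (-1:ℚ)^(k:ℕ) * (((2*n+1).factorial * (k:ℕ).factorial * (2*n-2*(k:ℕ)).factorial : ℕ) : ℚ)
        / (((2*n+1-(k:ℕ)).factorial : ℕ) : ℚ) := by
    intro k
    rw [hCA]
    exact S_diag n k (by omega)
  have hCzero : ∀ k j : Fin (n+1), (k:ℕ) < (j:ℕ) → Cm k j = 0 := by
    intro k j h
    simp [hC, Nat.choose_eq_zero_of_lt h]
  set T := Cm * A * Cm.transpose with hT
  have hTlow : ∀ k l : Fin (n+1), (l:ℕ) < (k:ℕ) → T k l = 0 := by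
    intro k l h
    rw [hT, Matrix.mul_apply]
    apply Finset.sum_eq_zero
    intro m _
    rcases lt_or_ge (l:ℕ) (m:ℕ) with hm | hm
    · rw [Matrix.transpose_apply, hCzero l m hm, mul_zero]
    · rw [hvan k m (by omega), zero_mul]
  have hAsym : A.transpose = A := by
    ext i j
    rw [Matrix.transpose_apply]
    simp only [hA, Matrix.of_apply]
    rw [show (j:ℕ)+(i:ℕ) = (i:ℕ)+(j:ℕ) by omega, show 2*n-(j:ℕ)-(i:ℕ) = 2*n-(i:ℕ)-(j:ℕ) by omega]
  have hTsym : T.transpose = T := by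
    rw [hT, Matrix.transpose_mul, Matrix.transpose_mul, Matrix.transpose_transpose, hAsym,
      Matrix.mul_assoc]
  have hTdiag : T = Matrix.diagonal (fun k => (Cm * A) k k * Cm k k) := by
    ext k l
    rcases lt_trichotomy (k:ℕ) (l:ℕ) with h | h | h
    · have h1 : T k l = T.transpose k l := by rw [hTsym]
      rw [h1, Matrix.transpose_apply, hTlow l k h,
        Matrix.diagonal_apply_ne _ (by intro hc; rw [hc] at h; omega)]
    · have hkl : k = l := Fin.ext h
      subst hkl
      rw [Matrix.diagonal_apply_eq, hT, Matrix.mul_apply]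
      rw [Finset.sum_eq_single k]
      · rw [Matrix.transpose_apply]
      · intro m _ hm
        rcases lt_or_ge (m:ℕ) (k:ℕ) with h2 | h2
        · rw [hvan k m h2, zero_mul]
        · have h3 : (k:ℕ) < (m:ℕ) := by
            rcases Nat.eq_or_lt_of_le h2 with h4 | h4
            · exact absurd (Fin.ext h4.symm) hm
            · exact h4
          rw [Matrix.transpose_apply, hCzero k m h3, mul_zero]
      · intro hk
        exact absurd (Finset.mem_univ k) hk
    · rw [hTlow k l h, Matrix.diagonal_apply_ne _ (by intro hc; rw [hc] at h; omega)]
  have hdetC : Cm.det = ∏ k : Fin (n+1), Cm k k := by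
    apply Matrix.det_of_lowerTriangular
    intro i j hij
    exact hCzero i j (by exact_mod_cast hij)
  have hdetT : T.det = ∏ k : Fin (n+1), ((Cm * A) k k * Cm k k) := by
    rw [hTdiag, Matrix.det_diagonal]
  have hdetT2 : T.det = A.det * Cm.det^2 := by
    rw [hT, Matrix.det_mul, Matrix.det_mul, Matrix.det_transpose]
    ring
  have hgoal : A.det * Cm.det^2 = ∏ k : Fin (n+1), ((Cm * A) k k * Cm k k) := by
    rw [← hdetT2, hdetT]
  -- convert products to range products and simplify signs
  have hCkk : ∀ k : Fin (n+1), Cm k k = (-1:ℚ)^(k:ℕ) * (((2*n+1-(k:ℕ)).choose (k:ℕ) : ℕ) : ℚ) := by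
    intro k
    simp [hC, Nat.choose_self]
  have hsq : Cm.det^2 = (∏ k ∈ range (n+1), (((2*n+1-k).choose k : ℕ) : ℚ))^2 := by
    rw [hdetC, ← Finset.prod_pow]
    have e1 : ∀ k : Fin (n+1), Cm k k ^ 2 = ((((2*n+1-(k:ℕ)).choose (k:ℕ) : ℕ) : ℚ))^2 := by
      intro k
      rw [hCkk k]
      rw [mul_pow, ← pow_mul, mul_comm (k:ℕ) 2, pow_mul]
      norm_num
    rw [Finset.prod_congr rfl (fun k _ => e1 k)]
    rw [Fin.prod_univ_eq_prod_range (fun k => ((((2*n+1-k).choose k : ℕ) : ℚ))^2) (n+1)]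
    rw [Finset.prod_pow]
  have hrhs : ∏ k : Fin (n+1), ((Cm * A) k k * Cm k k)
      = ∏ k ∈ range (n+1), ((((2*n+1-k).choose k : ℕ):ℚ)
        * ((((2*n+1).factorial * k.factorial * (2*n-2*k).factorial : ℕ)):ℚ)
        / (((2*n+1-k).factorial : ℕ):ℚ)) := by
    rw [← Fin.prod_univ_eq_prod_range (fun k => ((((2*n+1-k).choose k : ℕ):ℚ)
        * ((((2*n+1).factorial * k.factorial * (2*n-2*k).factorial : ℕ)):ℚ)
        / (((2*n+1-k).factorial : ℕ):ℚ))) (n+1)]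
    refine Finset.prod_congr rfl fun k _ => ?_
    rw [hdiagval k, hCkk k]
    have hs : (-1:ℚ)^(k:ℕ) * (-1:ℚ)^(k:ℕ) = 1 := by
      rw [← pow_add, ← two_mul, pow_mul]
      norm_num
    rw [show (-1:ℚ)^(k:ℕ) * (((2*n+1).factorial * (k:ℕ).factorial * (2*n-2*(k:ℕ)).factorial : ℕ):ℚ)
        / (((2*n+1-(k:ℕ)).factorial:ℕ):ℚ) * ((-1:ℚ)^(k:ℕ) * (((2*n+1-(k:ℕ)).choose (k:ℕ):ℕ):ℚ))
      = ((-1:ℚ)^(k:ℕ)*(-1:ℚ)^(k:ℕ)) * ((((2*n+1-(k:ℕ)).choose (k:ℕ):ℕ):ℚ)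
        * (((2*n+1).factorial * (k:ℕ).factorial * (2*n-2*(k:ℕ)).factorial : ℕ):ℚ)
        / (((2*n+1-(k:ℕ)).factorial:ℕ):ℚ)) from by ring, hs, one_mul]
  rw [hsq] at hgoal
  rw [hgoal, hrhs]
/-- Superfactorial: `sf r = ∏_{k=0}^{r} k!`. -/
def sf (r : ℕ) : ℕ := ∏ k ∈ Finset.range (r + 1), Nat.factorial k

lemma N1 (n : ℕ) : ∏ k ∈ range (n+1), ((2*n-2*k).factorial * (2*n+1-2*k).factorial)
    = sf (2*n+1) := by
  induction n with
  | zero => simp [sf]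
  | succ n ih =>
    have h1 : ∏ k ∈ range (n+2), ((2*(n+1)-2*k).factorial * (2*(n+1)+1-2*k).factorial)
        = (∏ k ∈ range (n+1), ((2*n-2*k).factorial * (2*n+1-2*k).factorial))
          * ((2*(n+1)).factorial * (2*(n+1)+1).factorial) := by
      rw [Finset.prod_range_succ' (fun k => (2*(n+1)-2*k).factorial * (2*(n+1)+1-2*k).factorial) (n+1)]
      congr 1
      · refine Finset.prod_congr rfl fun k _ => ?_
        rw [show 2*(n+1)-2*(k+1) = 2*n-2*k by omega, show 2*(n+1)+1-2*(k+1) = 2*n+1-2*k by omega]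
    have h2 : sf (2*(n+1)+1) = sf (2*n+1) * ((2*(n+1)).factorial * (2*(n+1)+1).factorial) := by
      unfold sf
      rw [show 2*(n+1)+1+1 = (2*n+1+1)+1+1 by omega, Finset.prod_range_succ,
        Finset.prod_range_succ, show (2*n+1+1) = 2*(n+1) by omega,
        show (2*n+1+1)+1 = 2*(n+1)+1 by omega]
      ring
    rw [h1, ih, h2]
  
lemma N2 (n : ℕ) : ∏ k ∈ range (n+1), ((2*n+1-k).factorial * (n-k).factorial)
    = sf (2*n+1) := by
  rw [Finset.prod_mul_distrib]
  have h1 : ∏ k ∈ range (n+1), (n-k).factorial = ∏ k ∈ range (n+1), k.factorial := by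
    have := Finset.prod_range_reflect (fun j => j.factorial) (n+1)
    rw [← this]
    exact Finset.prod_congr rfl fun k hk => by
      congr 1
      all_goals omega
  have h2 : ∏ k ∈ range (n+1), (2*n+1-k).factorial
      = ∏ k ∈ range (n+1), (n+1+k).factorial := by
    have := Finset.prod_range_reflect (fun j => (n+1+j).factorial) (n+1)
    rw [← this]
    exact Finset.prod_congr rfl fun k hk => by
      congr 1
      all_goals (have := Finset.mem_range.mp hk; omega)
  rw [h1, h2]
  unfold sf
  rw [show 2*n+1+1 = (n+1)+(n+1) by omega, Finset.prod_range_add Nat.factorial (n+1) (n+1)]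
  ring

lemma entryfact (n i j : ℕ) (hi : i ≤ n) (hj : j ≤ n) :
    (i+j).factorial * (2*n-i-j).factorial
      = (i.factorial * (n-i).factorial) * ((i+j).choose i * (2*n-i-j).choose (n-i))
        * (j.factorial * (n-j).factorial) := by
  have h1 := Nat.choose_mul_factorial_mul_factorial (Nat.le_add_right i j)
  rw [show i+j-i = j by omega] at h1
  have h2 := Nat.choose_mul_factorial_mul_factorial (show n-i ≤ 2*n-i-j by omega)
  rw [show 2*n-i-j-(n-i) = n-j by omega] at h2
  rw [← h1, ← h2]
  ring

theorem kuperberg_propp (n : ℕ) :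
    Matrix.det (Matrix.of fun i j : Fin (n + 1) =>
      ((Nat.choose ((i : ℕ) + j) i * Nat.choose (2 * n - i - j) (n - i) : ℕ) : ℚ)) =
    ((Nat.factorial (2 * n + 1) : ℚ)) ^ (n + 1) / (sf (2 * n + 1) : ℚ) := by
  classical
  set M : Matrix (Fin (n+1)) (Fin (n+1)) ℚ := Matrix.of fun i j : Fin (n + 1) =>
      ((Nat.choose ((i : ℕ) + j) i * Nat.choose (2 * n - i - j) (n - i) : ℕ) : ℚ) with hM
  set Dm : Matrix (Fin (n+1)) (Fin (n+1)) ℚ :=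
      Matrix.diagonal (fun i : Fin (n+1) => (((i:ℕ).factorial * (n-(i:ℕ)).factorial : ℕ) : ℚ)) with hDm
  set A : Matrix (Fin (n+1)) (Fin (n+1)) ℚ := Matrix.of fun i j : Fin (n+1) =>
      ((((i:ℕ)+(j:ℕ)).factorial * (2*n-(i:ℕ)-(j:ℕ)).factorial : ℕ) : ℚ) with hA
  have hADM : A = Dm * M * Dm := by
    ext i j
    have h1 : (Dm * M * Dm) i j
        = (((i:ℕ).factorial * (n-(i:ℕ)).factorial : ℕ) : ℚ) * M i j
          * (((j:ℕ).factorial * (n-(j:ℕ)).factorial : ℕ) : ℚ) := by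
      rw [Matrix.mul_apply, Finset.sum_eq_single j]
      · rw [Matrix.mul_apply, Finset.sum_eq_single i]
        · rw [hDm, Matrix.diagonal_apply_eq, Matrix.diagonal_apply_eq]
        · intro c _ hc
          rw [hDm, Matrix.diagonal_apply_ne _ (Ne.symm hc), zero_mul]
        · intro h; exact absurd (Finset.mem_univ i) h
      · intro b _ hb
        rw [hDm, Matrix.diagonal_apply_ne _ hb, mul_zero]
      · intro h; exact absurd (Finset.mem_univ j) h
    rw [h1, hA, hM]
    simp only [Matrix.of_apply]
    have he := entryfact n (i:ℕ) (j:ℕ) (by omega) (by omega)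
    push_cast [he]
    all_goals try ring
  -- determinant relation
  have hdetA : A.det = M.det * (∏ i : Fin (n+1), (((i:ℕ).factorial * (n-(i:ℕ)).factorial : ℕ) : ℚ))^2 := by
    rw [hADM, Matrix.det_mul, Matrix.det_mul, hDm, Matrix.det_diagonal]
    ring
  -- ℕ level products
  set F := (2*n+1).factorial with hF
  set PC := ∏ k ∈ range (n+1), (2*n+1-k).choose k with hPC
  set PX := ∏ k ∈ range (n+1), (F * k.factorial * (2*n-2*k).factorial) with hPX
  set PY := ∏ k ∈ range (n+1), (2*n+1-k).factorial with hPY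
  set Pd := ∏ k ∈ range (n+1), (k.factorial * (n-k).factorial) with hPd
  set PA := ∏ k ∈ range (n+1), k.factorial with hPA
  set PB := ∏ k ∈ range (n+1), (2*n-2*k).factorial with hPB
  set PE := ∏ k ∈ range (n+1), (n-k).factorial with hPE
  set PG := ∏ k ∈ range (n+1), (2*n+1-2*k).factorial with hPG
  set S := sf (2*n+1) with hS
  -- relations
  have rPX : PX = F^(n+1) * PA * PB := by
    rw [hPX, Finset.prod_mul_distrib, Finset.prod_mul_distrib, Finset.prod_const,
      Finset.card_range]
  have rPd : Pd = PA * PE := by rw [hPd, Finset.prod_mul_distrib]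
  have rPCAG : PC * PA * PG = PY := by
    rw [hPC, hPA, hPG, ← Finset.prod_mul_distrib, ← Finset.prod_mul_distrib]
    refine Finset.prod_congr rfl fun k hk => ?_
    have hkn : k ≤ n := by have := Finset.mem_range.mp hk; omega
    have := Nat.choose_mul_factorial_mul_factorial (show k ≤ 2*n+1-k by omega)
    rw [show 2*n+1-k-k = 2*n+1-2*k by omega] at this
    rw [← this]
    all_goals try ring
  have rN1 : PB * PG = S := by
    rw [hPB, hPG, ← Finset.prod_mul_distrib]
    exact N1 n
  have rN2 : PY * PE = S := by
    rw [hPY, hPE, ← Finset.prod_mul_distrib]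
    exact N2 n
  -- core cancellation identity
  have hAGpos : 0 < PA * PG := by
    apply Nat.mul_pos <;> exact Finset.prod_pos (fun k _ => by positivity)
  have NID : F^(n+1) * Pd^2 * PC^2 * PY * (PA * PG) = PC * PX * S * (PA * PG) := by
    calc F^(n+1) * Pd^2 * PC^2 * PY * (PA * PG)
        = F^(n+1) * (PA*PE)^2 * PC * (PC*PA*PG) * PY := by rw [rPd]; ring
      _ = F^(n+1) * (PA*PE)^2 * PC * PY * PY := by rw [rPCAG]
      _ = F^(n+1) * PC * PA^2 * (PY*PE)^2 := by ring
      _ = F^(n+1) * PC * PA^2 * S^2 := by rw [rN2]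
      _ = F^(n+1) * PC * PA^2 * S * (PB * PG) := by rw [rN1]; ring
      _ = PC * PX * S * (PA * PG) := by rw [rPX]; ring
  have CORE : F^(n+1) * Pd^2 * PC^2 * PY = PC * PX * S := by
    exact Nat.eq_of_mul_eq_mul_right hAGpos NID
  -- positivity
  have hPdq : ((Pd:ℕ):ℚ) ≠ 0 :=
    Nat.cast_ne_zero.mpr (Finset.prod_pos (fun k _ => by positivity)).ne'
  have hPCq : ((PC:ℕ):ℚ) ≠ 0 :=
    Nat.cast_ne_zero.mpr (Finset.prod_pos (fun k hk =>
      Nat.choose_pos (by have := Finset.mem_range.mp hk; omega))).ne'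
  have hPYq : ((PY:ℕ):ℚ) ≠ 0 :=
    Nat.cast_ne_zero.mpr (Finset.prod_pos (fun k _ => Nat.factorial_pos _)).ne'
  have hSq : ((S:ℕ):ℚ) ≠ 0 := by
    rw [hS]
    refine Nat.cast_ne_zero.mpr ?_
    unfold sf
    exact (Finset.prod_pos (fun k _ => Nat.factorial_pos _)).ne'
  -- use detA
  have hDA := detA n
  rw [← hA] at hDA
  have hc1 : ∏ k ∈ range (n+1), (((2*n+1-k).choose k : ℕ):ℚ) = ((PC:ℕ):ℚ) := by
    rw [hPC, Nat.cast_prod]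
  have hc2 : ∏ k ∈ range (n+1), ((((2*n+1-k).choose k : ℕ):ℚ)
      * ((((2*n+1).factorial * k.factorial * (2*n-2*k).factorial : ℕ)):ℚ)
      / (((2*n+1-k).factorial : ℕ):ℚ))
      = ((PC:ℕ):ℚ) * ((PX:ℕ):ℚ) / ((PY:ℕ):ℚ) := by
    rw [Finset.prod_div_distrib, Finset.prod_mul_distrib, hPC, hPX, hPY, hF,
      Nat.cast_prod, Nat.cast_prod, Nat.cast_prod]
  rw [hc1, hc2] at hDA
  have hc3 : ∏ i : Fin (n+1), (((i:ℕ).factorial * (n-(i:ℕ)).factorial : ℕ) : ℚ) = ((Pd:ℕ):ℚ) := by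
    rw [Fin.prod_univ_eq_prod_range (fun k => ((k.factorial * (n-k).factorial : ℕ) : ℚ)) (n+1),
      hPd, Nat.cast_prod]
    all_goals try push_cast
    all_goals try rfl
  rw [hdetA, hc3] at hDA
  -- hDA : M.det * ↑Pd^2 * ↑PC^2 = ↑PC * ↑PX / ↑PY
  have h2 : (((F:ℕ):ℚ)^(n+1) / ((S:ℕ):ℚ)) * (((Pd:ℕ):ℚ)^2 * ((PC:ℕ):ℚ)^2)
      = ((PC:ℕ):ℚ) * ((PX:ℕ):ℚ) / ((PY:ℕ):ℚ) := by
    rw [div_mul_eq_mul_div, div_eq_div_iff hSq hPYq]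
    have := congrArg (Nat.cast (R := ℚ)) CORE
    push_cast at this
    linear_combination this
  have hc : (((Pd:ℕ):ℚ)^2 * ((PC:ℕ):ℚ)^2) ≠ 0 :=
    mul_ne_zero (pow_ne_zero _ hPdq) (pow_ne_zero _ hPCq)
  apply mul_right_cancel₀ hc
  rw [show M.det * (((Pd:ℕ):ℚ)^2 * ((PC:ℕ):ℚ)^2) = M.det * ((Pd:ℕ):ℚ)^2 * ((PC:ℕ):ℚ)^2 by ring,
    hDA, h2]
end

section
/- Dodgson condensation: for any n×n matrix A over a commutative ring (or field), with n ≥ 2, det(A) · det(A') = det(A_{NW}) · det(A_{SE}) − det(A_{NE}) · det(A_{SW}), where A' is the central (n−2)×(n−2) submatrix obtained by deleting the first and last rows and columns, and A_{NW}, A_{SE}, A_{NE}, A_{SW} are the four (n−1)×(n−1) connected corner submatrices obtained by deleting the last row and last column, first row and first column, last row and first column, and first row and last column, respectively. -/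
/-!
Split the indices into the two ends `{0, n + 1}` and the interior, and write matrices in the
corresponding block form. If `B` agrees with `adjugate A` on the first block column and with the
identity on the second, then `A * B` is block upper triangular with diagonal blocks `det A • 1`
and the interior block of `A`, so `det A * det (adjugate A)₁₁ = det A ^ 2 * det A'`. For the
generic matrix `det A` can be cancelled, which gives Jacobi's identity
`det (adjugate A)₁₁ = det A * det A'` for every matrix. The four entries of `(adjugate A)₁₁` are
the signed corner minors, and the signs of the two off-diagonal ones cancel in the determinant.
-/

open Matrix

noncomputable def finEndsSumEquiv (n : ℕ) : Fin 2 ⊕ Fin n ≃ Fin (n + 2) :=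
  Equiv.ofBijective (Sum.elim ![0, Fin.last (n + 1)] fun k => k.castSucc.succ) <| by
    rw [Fintype.bijective_iff_injective_and_card]
    refine ⟨?_, by simp [add_comm]⟩
    rintro (a | a) (b | b) h <;> (try fin_cases a) <;> (try fin_cases b) <;>
      simp_all [Fin.ext_iff] <;> omega

@[simp]
theorem finEndsSumEquiv_inl_zero {n : ℕ} : finEndsSumEquiv n (Sum.inl 0) = 0 := rfl

@[simp]
theorem finEndsSumEquiv_inl_one {n : ℕ} : finEndsSumEquiv n (Sum.inl 1) = Fin.last (n + 1) := rfl

namespace Matrix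

variable {R : Type*} [CommRing R]

section Blocks

variable {m n : Type*} [Fintype m] [Fintype n] [DecidableEq m] [DecidableEq n]

theorem mul_fromBlocks_adjugate_toBlocks (A : Matrix (m ⊕ n) (m ⊕ n) R) :
    A * fromBlocks (adjugate A).toBlocks₁₁ 0 (adjugate A).toBlocks₂₁ 1 =
      fromBlocks (A.det • 1) A.toBlocks₁₂ 0 A.toBlocks₂₂ := by
  have h i j : (A * adjugate A) i j = (A.det • (1 : Matrix (m ⊕ n) (m ⊕ n) R)) i j := by
    rw [mul_adjugate]
  simp only [mul_apply, Fintype.sum_sum_type] at h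
  ext (i | i) (j | j) <;>
    simp [mul_apply, Fintype.sum_sum_type, toBlocks₁₁, toBlocks₁₂, toBlocks₂₁, toBlocks₂₂,
      one_apply, h]

theorem det_mul_det_toBlocks₁₁_adjugate (A : Matrix (m ⊕ n) (m ⊕ n) R) :
    A.det * (adjugate A).toBlocks₁₁.det = A.det ^ Fintype.card m * A.toBlocks₂₂.det := by
  have h := congrArg det (mul_fromBlocks_adjugate_toBlocks A)
  rwa [det_mul, det_fromBlocks_zero₁₂, det_one, mul_one, det_fromBlocks_zero₂₁, det_smul, det_one,
    mul_one] at h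

theorem det_toBlocks₁₁_adjugate [Nonempty m] (A : Matrix (m ⊕ n) (m ⊕ n) R) :
    (adjugate A).toBlocks₁₁.det = A.det ^ (Fintype.card m - 1) * A.toBlocks₂₂.det := by
  let X := mvPolynomialX (m ⊕ n) (m ⊕ n) ℤ
  suffices (adjugate X).toBlocks₁₁.det = X.det ^ (Fintype.card m - 1) * X.toBlocks₂₂.det by
    have := congrArg (MvPolynomial.aeval fun p : (m ⊕ n) × (m ⊕ n) => A p.1 p.2) this
    rw [map_mul, map_pow, AlgHom.map_det, AlgHom.map_det, AlgHom.map_det] at this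
    rw [← mvPolynomialX_mapMatrix_aeval ℤ A, ← AlgHom.map_adjugate]
    exact this
  apply mul_left_cancel₀ (det_mvPolynomialX_ne_zero (m ⊕ n) ℤ)
  rw [det_mul_det_toBlocks₁₁_adjugate, ← mul_assoc, ← pow_succ',
    Nat.sub_add_cancel Fintype.card_pos]

end Blocks

theorem det_toBlocks₁₁_submatrix_finEndsSumEquiv_adjugate {n : ℕ}
    (A : Matrix (Fin (n + 2)) (Fin (n + 2)) R) :
    ((adjugate A).submatrix (finEndsSumEquiv n) (finEndsSumEquiv n)).toBlocks₁₁.det =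
      (A.submatrix Fin.castSucc Fin.castSucc).det * (A.submatrix Fin.succ Fin.succ).det -
        (A.submatrix Fin.castSucc Fin.succ).det * (A.submatrix Fin.succ Fin.castSucc).det := by
  have hsign : (-1 : R) ^ (n + 1 + (n + 1)) = 1 := Even.neg_one_pow ⟨n + 1, rfl⟩
  simp only [det_fin_two, toBlocks₁₁, of_apply, submatrix_apply, finEndsSumEquiv_inl_zero,
    finEndsSumEquiv_inl_one, adjugate_fin_succ_eq_det_submatrix, Fin.succAbove_zero,
    Fin.succAbove_last, Fin.val_zero, Fin.val_last, add_zero, zero_add, pow_zero, one_mul]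
  linear_combination
    ((A.submatrix Fin.succ Fin.succ).det * (A.submatrix Fin.castSucc Fin.castSucc).det -
      (A.submatrix Fin.castSucc Fin.succ).det * (A.submatrix Fin.succ Fin.castSucc).det) * hsign

end Matrix

/-- Dodgson condensation (Desnanot–Jacobi identity) for an `(n+2) × (n+2)`
matrix over a commutative ring. -/
theorem dodgson_condensation {R : Type*} [CommRing R] (n : ℕ)
    (A : Matrix (Fin (n + 2)) (Fin (n + 2)) R) :
    Matrix.det A *
      Matrix.det (Matrix.of fun i j : Fin n =>
        A ⟨(i : ℕ) + 1, by omega⟩ ⟨(j : ℕ) + 1, by omega⟩) =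
    Matrix.det (Matrix.of fun i j : Fin (n + 1) => A i.castSucc j.castSucc) *
      Matrix.det (Matrix.of fun i j : Fin (n + 1) => A i.succ j.succ) -
    Matrix.det (Matrix.of fun i j : Fin (n + 1) => A i.castSucc j.succ) *
      Matrix.det (Matrix.of fun i j : Fin (n + 1) => A i.succ j.castSucc) := by
  have h := det_toBlocks₁₁_adjugate (A.submatrix (finEndsSumEquiv n) (finEndsSumEquiv n))
  rw [adjugate_submatrix_equiv_self, det_toBlocks₁₁_submatrix_finEndsSumEquiv_adjugate,
    det_submatrix_equiv_self, Fintype.card_fin, Nat.add_one_sub_one, pow_one] at h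
  exact h.symm
end

section
/- For all natural numbers n, a, b with a + 1 ≤ n and b + 1 ≤ n, the 2×2 determinant C(a+b,a)C(2n-a-b,n-a)·C(a+b+2,a+1)C(2n-a-b-2,n-a-1) − C(a+b+1,a)C(2n-a-b-1,n-a)·C(a+b+1,a+1)C(2n-a-b-1,n-a-1) equals R_1(a,b), the m = 1 case of the product formula in the generalized Kuperberg–Propp identity. -/
set_option maxHeartbeats 1000000


lemma sf_succ (k : ℕ) : sf (k + 1) = sf k * Nat.factorial (k + 1) := by
  simp [sf, Finset.prod_range_succ]

lemma sf_pred (k : ℕ) :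
    sf (k + 1) = sf (k - 1) * Nat.factorial k * Nat.factorial (k + 1) := by
  cases k with
  | zero => simp [sf]
  | succ m =>
      rw [sf_succ, sf_succ]
      simp [Nat.succ_sub_one, mul_assoc]

lemma sf_ne_zero (k : ℕ) : sf k ≠ 0 := by
  induction k with
  | zero => simp [sf]
  | succ m ih => rw [sf_succ]; exact Nat.mul_ne_zero ih (Nat.factorial_ne_zero _)

theorem rabbit_base_one (n a b : ℕ) (ha : a + 1 ≤ n) (hb : b + 1 ≤ n) :
    ((Nat.choose (a + b) a * Nat.choose (2 * n - a - b) (n - a) : ℕ) : ℚ) *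
      ((Nat.choose (a + b + 2) (a + 1) *
        Nat.choose (2 * n - a - b - 2) (n - a - 1) : ℕ) : ℚ) -
    ((Nat.choose (a + b + 1) a * Nat.choose (2 * n - a - b - 1) (n - a) : ℕ) : ℚ) *
      ((Nat.choose (a + b + 1) (a + 1) *
        Nat.choose (2 * n - a - b - 1) (n - a - 1) : ℕ) : ℚ) =
    ((Nat.factorial (a + b) * Nat.factorial (2 * n + 1) ^ 2 *
      sf (2 * n - 1) * sf 1 * sf (1 + a + b) * sf (2 * n - 1 - a - b) *
      sf a * sf b * sf (n - a - 2) * sf (n - b - 2) : ℕ) : ℚ) /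
    ((Nat.factorial a * Nat.factorial b * sf (2 * n + 1) * sf (n - a) *
      sf (n - b) * sf (1 + a) * sf (1 + b) * sf (a + b) *
      sf (2 * n - 3 - a - b) : ℕ) : ℚ) := by
  obtain ⟨p, hp⟩ : ∃ p, n = a + 1 + p := ⟨n - a - 1, by omega⟩
  obtain ⟨q, hq⟩ : ∃ q, n = b + 1 + q := ⟨n - b - 1, by omega⟩
  rw [show 2 * n - a - b - 2 = p + q by omega,
      show 2 * n - a - b - 1 = p + q + 1 by omega,
      show 2 * n - 1 - a - b = p + q + 1 by omega,
      show 2 * n - 3 - a - b = p + q - 1 by omega,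
      show n - a - 2 = p - 1 by omega,
      show n - b - 2 = q - 1 by omega,
      show n - a - 1 = p by omega,
      show n - a = p + 1 by omega,
      show n - b = q + 1 by omega,
      show 2 * n - a - b = p + q + 2 by omega,
      show 2 * n + 1 = a + b + p + q + 2 + 1 by omega,
      show 2 * n - 1 = a + b + p + q + 1 by omega,
      show 1 + a + b = a + b + 1 by omega,
      show 1 + a = a + 1 by omega,
      show 1 + b = b + 1 by omega]
  rw [sf_pred p, sf_pred q, sf_pred (p + q), sf_pred (a + b + p + q + 2),
      show a + b + p + q + 2 - 1 = a + b + p + q + 1 by omega,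
      sf_succ a, sf_succ b, sf_succ (a + b),
      show sf 1 = 1 by decide]
  have hf : ∀ k : ℕ, ((Nat.factorial k : ℕ) : ℚ) ≠ 0 :=
    fun k => Nat.cast_ne_zero.mpr (Nat.factorial_ne_zero k)
  have hs : ∀ k : ℕ, ((sf k : ℕ) : ℚ) ≠ 0 :=
    fun k => Nat.cast_ne_zero.mpr (sf_ne_zero k)
  trans (((Nat.factorial (a + b) : ℚ) * (Nat.factorial (a + b + 1) : ℚ) *
      (Nat.factorial (p + q) : ℚ) * (Nat.factorial (p + q + 1) : ℚ) *
      ((a : ℚ) + b + p + q + 3)) /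
    ((Nat.factorial a : ℚ) * (Nat.factorial b : ℚ) * (Nat.factorial (a + 1) : ℚ) *
      (Nat.factorial (b + 1) : ℚ) * (Nat.factorial p : ℚ) * (Nat.factorial q : ℚ) *
      (Nat.factorial (p + 1) : ℚ) * (Nat.factorial (q + 1) : ℚ)))
  · push_cast
    rw [Nat.cast_choose ℚ (show a ≤ a + b by omega),
        Nat.cast_choose ℚ (show p + 1 ≤ p + q + 2 by omega),
        Nat.cast_choose ℚ (show a + 1 ≤ a + b + 2 by omega),
        Nat.cast_choose ℚ (show p ≤ p + q by omega),
        Nat.cast_choose ℚ (show a ≤ a + b + 1 by omega),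
        Nat.cast_choose ℚ (show p + 1 ≤ p + q + 1 by omega),
        Nat.cast_choose ℚ (show a + 1 ≤ a + b + 1 by omega),
        Nat.cast_choose ℚ (show p ≤ p + q + 1 by omega),
        show a + b - a = b by omega,
        show p + q + 2 - (p + 1) = q + 1 by omega,
        show a + b + 2 - (a + 1) = b + 1 by omega,
        show p + q - p = q by omega,
        show a + b + 1 - a = b + 1 by omega,
        show p + q + 1 - (p + 1) = q by omega,
        show a + b + 1 - (a + 1) = b by omega,
        show p + q + 1 - p = q + 1 by omega]
    simp only [show ∀ m : ℕ, m + 2 = m + 1 + 1 from fun m => by omega]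
    simp only [Nat.factorial_succ]
    push_cast
    field_simp
    ring
  · rw [Nat.factorial_succ (a + b + p + q + 2)]
    push_cast
    rw [div_eq_div_iff (by simp [mul_ne_zero_iff, hf, hs])
      (by simp [mul_ne_zero_iff, hf, hs]; positivity)]
    ring
end
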